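/- arXiv:2605.22507 — 2 statements merged into one kernel-verified Lean document; each statement's English description precedes it below -/
import Mathlib

section
/- Let d ≥ 1 and H ∈ ℕ, and let μ_src and μ_tgt be Borel probability measures on ℝ^d with finite second moments. Then the infimum, over all families (μ_0,…,μ_H) feasible for the dynamic primal LP with source μ_src and target μ_tgt, of the cost ((H+1)/2)·Σ_{h=0}^{H} ∫‖x−y‖² dμ_h(x,y) equals W₂²(μ_src, μ_tgt). -/
open MeasureTheory ENNReal

/-- The squared Wasserstein-2 distance. -/
noncomputable def W2sq {d : ℕ} (μ ν : Measure (EuclideanSpace ℝ (Fin d))) : ℝ≥0∞ :=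
  ⨅ (γ : Measure (EuclideanSpace ℝ (Fin d) × EuclideanSpace ℝ (Fin d)))
    (_ : IsProbabilityMeasure γ ∧ γ.map Prod.fst = μ ∧ γ.map Prod.snd = ν),
      2⁻¹ * ∫⁻ p, (‖p.1 - p.2‖₊ : ℝ≥0∞) ^ 2 ∂γ

/-- Feasibility for the dynamic primal LP with horizon `H`, source `μsrc`, target `μtgt`. -/
def LPfeasible {d : ℕ} (H : ℕ) (μsrc μtgt : Measure (EuclideanSpace ℝ (Fin d)))
    (μ : Fin (H + 1) → Measure (EuclideanSpace ℝ (Fin d) × EuclideanSpace ℝ (Fin d))) : Prop :=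
  (∀ h, IsProbabilityMeasure (μ h)) ∧
  (μ 0).map Prod.fst = μsrc ∧
  (∀ h : Fin H, (μ h.castSucc).map Prod.snd = (μ h.succ).map Prod.fst) ∧
  (μ (Fin.last H)).map Prod.snd = μtgt

/-- The cost of a family in the dynamic primal LP: `((H+1)/2) Σ_h ∫ ‖x-y‖² dμ_h`. -/
noncomputable def LPcost {d : ℕ} (H : ℕ)
    (μ : Fin (H + 1) → Measure (EuclideanSpace ℝ (Fin d) × EuclideanSpace ℝ (Fin d))) : ℝ≥0∞ :=
  ((H : ℝ≥0∞) + 1) / 2 * ∑ h, ∫⁻ p, (‖p.1 - p.2‖₊ : ℝ≥0∞) ^ 2 ∂(μ h)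

/-!
A feasible family is a chain of couplings `μ_h` linked through their marginals. Gluing the
chain (by disintegration along the shared coordinates) gives a coupling of source and target
whose `L²` displacement is, by Minkowski's inequality, at most `∑_h ‖x - y‖_{L²(μ_h)}`; by
Cauchy–Schwarz its square is at most `(H + 1) ∑_h ∫ ‖x - y‖² dμ_h`, so `W₂² ≤ LPcost`.
Conversely, cutting the straight-line displacement of any coupling `γ` into `H + 1` equal
segments gives a feasible family each of whose pieces costs `(H + 1)⁻²` times the cost of `γ`,
so its LP cost is exactly `½ ∫ ‖x - y‖² dγ`.
-/

open ProbabilityTheory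

theorem ENNReal.sq_sum_le_card_mul_sum_sq {ι : Type*} (s : Finset ι) (f : ι → ℝ≥0∞) :
    (∑ i ∈ s, f i) ^ 2 ≤ s.card * ∑ i ∈ s, f i ^ 2 := by
  simpa [ENNReal.rpow_two, show (2 : ℝ) - 1 = 1 by norm_num] using
    ENNReal.rpow_sum_le_const_mul_sum_rpow s f one_le_two

theorem MeasureTheory.Measure.exists_gluing {α β γ : Type*} [MeasurableSpace α] [MeasurableSpace β]
    [MeasurableSpace γ] [StandardBorelSpace α] [Nonempty α] [StandardBorelSpace γ] [Nonempty γ]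
    (μ : Measure (α × β)) (ν : Measure (β × γ)) [IsProbabilityMeasure μ] [IsProbabilityMeasure ν]
    (h : μ.map Prod.snd = ν.map Prod.fst) :
    ∃ π : Measure (β × α × γ), IsProbabilityMeasure π ∧
      π.map (fun p => (p.2.1, p.1)) = μ ∧ π.map (fun p => (p.1, p.2.2)) = ν := by
  -- Disintegrate both measures along the shared `β`-coordinate and take the conditional laws
  -- of the two outer coordinates independent.
  have hswap : (μ.map Prod.swap).fst = ν.fst := by
    rw [Measure.fst, Measure.map_map measurable_fst measurable_swap]; exact h
  refine ⟨ν.fst ⊗ₘ ((μ.map Prod.swap).condKernel ×ₖ ν.condKernel), inferInstance, ?_, ?_⟩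
  · calc _ = ((ν.fst ⊗ₘ ((μ.map Prod.swap).condKernel ×ₖ ν.condKernel)).map
            (Prod.map id Prod.fst)).map Prod.swap := by
          rw [Measure.map_map measurable_swap (by fun_prop)]; rfl
      _ = μ := by
          rw [← Measure.compProd_map measurable_fst, ← Kernel.fst_eq, Kernel.fst_prod, ← hswap,
            Measure.disintegrate, Measure.map_map measurable_swap measurable_swap,
            Prod.swap_swap_eq, Measure.map_id]
  · rw [show (fun p : β × α × γ => (p.1, p.2.2)) = Prod.map id Prod.snd from rfl,
      ← Measure.compProd_map measurable_snd, ← Kernel.snd_eq, Kernel.snd_prod, Measure.disintegrate]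

section Normed

variable {E : Type*} [NormedAddCommGroup E] [MeasurableSpace E]

noncomputable def displacementNorm (γ : Measure (E × E)) : ℝ≥0∞ :=
  eLpNorm (fun p : E × E => p.1 - p.2) 2 γ

theorem lintegral_nnnorm_sub_sq_eq_displacementNorm_sq (γ : Measure (E × E)) :
    ∫⁻ p, (‖p.1 - p.2‖₊ : ℝ≥0∞) ^ 2 ∂γ = displacementNorm γ ^ 2 := by
  have := eLpNorm_nnreal_pow_eq_lintegral (μ := γ) (f := fun p : E × E => p.1 - p.2)
    (p := 2) two_ne_zero
  simp only [NNReal.coe_ofNat, ENNReal.coe_ofNat, ENNReal.rpow_two] at this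
  rw [displacementNorm, this]; rfl

variable [BorelSpace E] [SecondCountableTopology E] [CompleteSpace E]

theorem exists_coupling_displacementNorm_le_add (μ ν : Measure (E × E)) [IsProbabilityMeasure μ]
    [IsProbabilityMeasure ν] (h : μ.map Prod.snd = ν.map Prod.fst) :
    ∃ γ : Measure (E × E), IsProbabilityMeasure γ ∧ γ.map Prod.fst = μ.map Prod.fst ∧
      γ.map Prod.snd = ν.map Prod.snd ∧
      displacementNorm γ ≤ displacementNorm μ + displacementNorm ν := by
  obtain ⟨π, hπ, rfl, rfl⟩ := μ.exists_gluing ν h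
  refine ⟨π.map (fun p => (p.2.1, p.2.2)), Measure.isProbabilityMeasure_map (by fun_prop),
    ?_, ?_, ?_⟩
  · rw [Measure.map_map measurable_fst (by fun_prop), Measure.map_map measurable_fst (by fun_prop)]
    rfl
  · rw [Measure.map_map measurable_snd (by fun_prop), Measure.map_map measurable_snd (by fun_prop)]
    rfl
  · have hf : Continuous fun p : E × E => p.1 - p.2 := by fun_prop
    simp only [displacementNorm]
    rw [eLpNorm_map_measure hf.aestronglyMeasurable (by fun_prop),
      eLpNorm_map_measure hf.aestronglyMeasurable (by fun_prop),
      eLpNorm_map_measure hf.aestronglyMeasurable (by fun_prop)]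
    have hsplit : (fun p : E × E => p.1 - p.2) ∘ (fun p : E × E × E => (p.2.1, p.2.2)) =
        ((fun p : E × E => p.1 - p.2) ∘ fun p => (p.2.1, p.1)) +
          (fun p : E × E => p.1 - p.2) ∘ fun p => (p.1, p.2.2) := by
      ext p; simp
    rw [hsplit]
    exact eLpNorm_add_le (by fun_prop) (by fun_prop) one_le_two

theorem exists_coupling_displacementNorm_le_sum {n : ℕ} (μ : Fin (n + 1) → Measure (E × E))
    (hμ : ∀ h, IsProbabilityMeasure (μ h))
    (hchain : ∀ h : Fin n, (μ h.castSucc).map Prod.snd = (μ h.succ).map Prod.fst) :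
    ∃ γ : Measure (E × E), IsProbabilityMeasure γ ∧ γ.map Prod.fst = (μ 0).map Prod.fst ∧
      γ.map Prod.snd = (μ (Fin.last n)).map Prod.snd ∧
      displacementNorm γ ≤ ∑ h, displacementNorm (μ h) := by
  induction n with
  | zero => exact ⟨μ 0, hμ 0, rfl, rfl, by simp⟩
  | succ n ih =>
    obtain ⟨γ, hγ, hfst, hsnd, hle⟩ := ih (fun h => μ h.castSucc) (fun h => hμ _)
      (fun h => by simpa only [Fin.succ_castSucc] using hchain h.castSucc)
    have hmatch : γ.map Prod.snd = (μ (Fin.last (n + 1))).map Prod.fst := by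
      simpa only [hsnd, Fin.succ_last] using hchain (Fin.last n)
    have := hμ (Fin.last (n + 1))
    obtain ⟨γ', hγ', hfst', hsnd', hle'⟩ := exists_coupling_displacementNorm_le_add γ _ hmatch
    refine ⟨γ', hγ', by rw [hfst', hfst]; rfl, hsnd', hle'.trans ?_⟩
    rw [Fin.sum_univ_castSucc]
    gcongr

end Normed

section Interpolation

variable {E : Type*} [NormedAddCommGroup E] [NormedSpace ℝ E] [MeasurableSpace E] [BorelSpace E]
  [SecondCountableTopology E]

open AffineMap

noncomputable def segmentCoupling (γ : Measure (E × E)) (s t : ℝ) : Measure (E × E) :=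
  γ.map fun p => (lineMap p.1 p.2 s, lineMap p.1 p.2 t)

theorem measurable_lineMap_fst_snd (t : ℝ) : Measurable fun p : E × E => lineMap p.1 p.2 t :=
  (by fun_prop : Continuous fun p : E × E => lineMap p.1 p.2 t).measurable

theorem map_fst_segmentCoupling (γ : Measure (E × E)) (s t : ℝ) :
    (segmentCoupling γ s t).map Prod.fst = γ.map fun p => lineMap p.1 p.2 s := by
  rw [segmentCoupling, Measure.map_map measurable_fst
    ((measurable_lineMap_fst_snd s).prodMk (measurable_lineMap_fst_snd t))]
  rfl

theorem map_snd_segmentCoupling (γ : Measure (E × E)) (s t : ℝ) :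
    (segmentCoupling γ s t).map Prod.snd = γ.map fun p => lineMap p.1 p.2 t := by
  rw [segmentCoupling, Measure.map_map measurable_snd
    ((measurable_lineMap_fst_snd s).prodMk (measurable_lineMap_fst_snd t))]
  rfl

theorem lintegral_segmentCoupling (γ : Measure (E × E)) (s t : ℝ) :
    ∫⁻ p, (‖p.1 - p.2‖₊ : ℝ≥0∞) ^ 2 ∂(segmentCoupling γ s t) =
      (‖t - s‖₊ : ℝ≥0∞) ^ 2 * ∫⁻ p, (‖p.1 - p.2‖₊ : ℝ≥0∞) ^ 2 ∂γ := by
  rw [segmentCoupling, lintegral_map (by fun_prop)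
    ((measurable_lineMap_fst_snd s).prodMk (measurable_lineMap_fst_snd t)),
    ← lintegral_const_mul _ (by fun_prop)]
  refine lintegral_congr fun p => ?_
  have : lineMap p.1 p.2 s - lineMap p.1 p.2 t = (t - s) • (p.1 - p.2) := by
    rw [lineMap_apply_module', lineMap_apply_module']; module
  rw [this, nnnorm_smul, ENNReal.coe_mul, mul_pow]

end Interpolation

section Euclidean

variable {d : ℕ}

local notation "ℝᵈ" => EuclideanSpace ℝ (Fin d)

noncomputable def displacementInterpolation (H : ℕ) (γ : Measure (ℝᵈ × ℝᵈ)) :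
    Fin (H + 1) → Measure (ℝᵈ × ℝᵈ) :=
  fun h => segmentCoupling γ ((h : ℕ) / (H + 1)) (((h : ℕ) + 1 : ℕ) / (H + 1))

theorem LPfeasible_displacementInterpolation (H : ℕ) (γ : Measure (ℝᵈ × ℝᵈ))
    [IsProbabilityMeasure γ] :
    LPfeasible H (γ.map Prod.fst) (γ.map Prod.snd) (displacementInterpolation H γ) := by
  refine ⟨fun h => Measure.isProbabilityMeasure_map ?_, ?_, fun h => ?_, ?_⟩
  · exact ((measurable_lineMap_fst_snd _).prodMk (measurable_lineMap_fst_snd _)).aemeasurable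
  · simp [displacementInterpolation, map_fst_segmentCoupling]
  · simp [displacementInterpolation, map_fst_segmentCoupling, map_snd_segmentCoupling]
  · have hH : (H : ℝ) + 1 ≠ 0 := by positivity
    simp [displacementInterpolation, map_snd_segmentCoupling, div_self hH]

theorem LPcost_displacementInterpolation (H : ℕ) (γ : Measure (ℝᵈ × ℝᵈ)) :
    LPcost H (displacementInterpolation H γ) = 2⁻¹ * ∫⁻ p, (‖p.1 - p.2‖₊ : ℝ≥0∞) ^ 2 ∂γ := by
  have hstep (h : ℕ) :
      (‖((h + 1 : ℕ) : ℝ) / (H + 1) - (h : ℝ) / (H + 1)‖₊ : ℝ≥0∞) = ((H : ℝ≥0∞) + 1)⁻¹ := by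
    have : ((h + 1 : ℕ) : ℝ) / (H + 1) - (h : ℝ) / (H + 1) = ((H + 1 : ℕ) : ℝ)⁻¹ := by
      push_cast; field_simp; ring
    rw [this, nnnorm_inv, Real.nnnorm_natCast, ENNReal.coe_inv (by positivity)]
    push_cast; rfl
  have hA : ((H : ℝ≥0∞) + 1) * ((H : ℝ≥0∞) + 1)⁻¹ = 1 :=
    ENNReal.mul_inv_cancel (by positivity) (by simp)
  simp only [LPcost, displacementInterpolation, lintegral_segmentCoupling, hstep,
    Finset.sum_const, Finset.card_univ, Fintype.card_fin, nsmul_eq_mul]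
  push_cast
  set C := ∫⁻ p, (‖p.1 - p.2‖₊ : ℝ≥0∞) ^ 2 ∂γ
  calc ((H : ℝ≥0∞) + 1) / 2 * (((H : ℝ≥0∞) + 1) * (((H : ℝ≥0∞) + 1)⁻¹ ^ 2 * C))
      = (((H : ℝ≥0∞) + 1) * ((H : ℝ≥0∞) + 1)⁻¹) ^ 2 * (2⁻¹ * C) := by
        rw [ENNReal.div_eq_inv_mul]; ring
    _ = 2⁻¹ * C := by rw [hA, one_pow, one_mul]

theorem iInf_LPcost_le_W2sq (H : ℕ) (μsrc μtgt : Measure (ℝᵈ)) :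
    ⨅ (μ : Fin (H + 1) → Measure (ℝᵈ × ℝᵈ))
      (_ : LPfeasible H μsrc μtgt μ), LPcost H μ ≤ W2sq μsrc μtgt := by
  refine le_iInf₂ fun γ ⟨hγ, hfst, hsnd⟩ => ?_
  subst hfst hsnd
  rw [← LPcost_displacementInterpolation H γ]
  exact iInf₂_le _ (LPfeasible_displacementInterpolation H γ)

theorem W2sq_le_LPcost {H : ℕ} {μsrc μtgt : Measure (ℝᵈ)}
    {μ : Fin (H + 1) → Measure (ℝᵈ × ℝᵈ)}
    (hμ : LPfeasible H μsrc μtgt μ) : W2sq μsrc μtgt ≤ LPcost H μ := by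
  obtain ⟨hprob, rfl, hchain, rfl⟩ := hμ
  obtain ⟨γ, hγ, hfst, hsnd, hle⟩ := exists_coupling_displacementNorm_le_sum μ hprob hchain
  calc W2sq ((μ 0).map Prod.fst) ((μ (Fin.last H)).map Prod.snd)
      ≤ 2⁻¹ * displacementNorm γ ^ 2 := by
        rw [← lintegral_nnnorm_sub_sq_eq_displacementNorm_sq]
        exact iInf₂_le γ ⟨hγ, hfst, hsnd⟩
    _ ≤ 2⁻¹ * (∑ h, displacementNorm (μ h)) ^ 2 := by gcongr
    _ ≤ 2⁻¹ * ((H + 1 : ℕ) * ∑ h, displacementNorm (μ h) ^ 2) := by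
        gcongr
        simpa using ENNReal.sq_sum_le_card_mul_sum_sq (Finset.univ : Finset (Fin (H + 1))) _
    _ = LPcost H μ := by
        simp only [LPcost, lintegral_nnnorm_sub_sq_eq_displacementNorm_sq]
        push_cast
        rw [ENNReal.div_eq_inv_mul, mul_assoc]

end Euclidean

theorem stmt2_general {d : ℕ} (H : ℕ)
    (μsrc μtgt : Measure (EuclideanSpace ℝ (Fin d))) :
    (⨅ (μ : Fin (H + 1) → Measure (EuclideanSpace ℝ (Fin d) × EuclideanSpace ℝ (Fin d)))
      (_ : LPfeasible H μsrc μtgt μ), LPcost H μ) = W2sq μsrc μtgt :=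
  (iInf_LPcost_le_W2sq H μsrc μtgt).antisymm (le_iInf₂ fun _ hμ => W2sq_le_LPcost hμ)

/-- the optimal value of the dynamic primal LP equals `W₂²(μsrc, μtgt)`. -/
theorem stmt2 {d : ℕ} (hd : 1 ≤ d) (H : ℕ)
    (μsrc μtgt : Measure (EuclideanSpace ℝ (Fin d)))
    [IsProbabilityMeasure μsrc] [IsProbabilityMeasure μtgt]
    (h2src : ∫⁻ x, (‖x‖₊ : ℝ≥0∞) ^ 2 ∂μsrc ≠ ⊤)
    (h2tgt : ∫⁻ x, (‖x‖₊ : ℝ≥0∞) ^ 2 ∂μtgt ≠ ⊤) :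
    (⨅ (μ : Fin (H + 1) → Measure (EuclideanSpace ℝ (Fin d) × EuclideanSpace ℝ (Fin d)))
      (_ : LPfeasible H μsrc μtgt μ), LPcost H μ) = W2sq μsrc μtgt :=
  stmt2_general H μsrc μtgt
end

section
/- Let d ≥ 1, H ∈ ℕ, and let μ_src and μ_tgt be Borel probability measures on ℝ^d with finite second moments. Let π_0,…,π_H : ℝ^d → ℝ^d be measurable maps feasible for transporting μ_src to μ_tgt whose dynamic cost equals W₂²(μ_src, μ_tgt). Then for μ_src-almost every x, the increments of the induced trajectory are all equal: π̄_h(x) − π̄_{h−1}(x) = π̄_0(x) − x for every h ∈ {0,…,H}; moreover the composite map π̄_H is an optimal Monge map, i.e. ½∫‖π̄_H(x) − x‖² dμ_src(x) = W₂²(μ_src, μ_tgt). -/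
open MeasureTheory ENNReal

/-- `trajComp π h = π̄_{h-1} = π_{h-1} ∘ ⋯ ∘ π_0`, with `trajComp π 0 = π̄_{-1} = id`. -/
def trajComp {α : Type*} (π : ℕ → α → α) : ℕ → α → α
  | 0 => id
  | n + 1 => π n ∘ trajComp π n

/-! Write `Δₕ(x) = π̄ₕ(x) − π̄ₕ₋₁(x)`. Telescoping gives `π̄_H(x) − x = ∑ₕ Δₕ(x)`, and the
Lagrange identity `2n ∑ ‖vᵢ‖² = ∑ᵢⱼ ‖vᵢ − vⱼ‖² + 2 ‖∑ vᵢ‖²` gives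
`‖∑ₕ Δₕ(x)‖² ≤ (H + 1) ∑ₕ ‖Δₕ(x)‖²`, with equality only if all `Δₕ(x)` coincide. As `π̄_H` pushes
`μ_src` to `μ_tgt`, the coupling `(id, π̄_H)` bounds `W₂²` by the static cost of `π̄_H`, which the
inequality bounds by the dynamic cost `= W₂²`. So both are equal; since `W₂²` is finite (finite
second moments, product coupling), equality of the integrals of the two sides of the pointwise
inequality forces equality almost everywhere. -/

open Finset

section SumOfSquares

variable {E : Type*} [NormedAddCommGroup E] [InnerProductSpace ℝ E] {ι : Type*}

theorem two_mul_card_mul_sum_norm_sq (s : Finset ι) (v : ι → E) :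
    2 * #s * ∑ i ∈ s, ‖v i‖ ^ 2 =
      ∑ i ∈ s, ∑ j ∈ s, ‖v i - v j‖ ^ 2 + 2 * ‖∑ i ∈ s, v i‖ ^ 2 := by
  simp_rw [norm_sub_sq_real, sum_add_distrib, sum_sub_distrib, sum_const, ← mul_sum,
    ← inner_sum, ← sum_inner, real_inner_self_eq_norm_sq, nsmul_eq_mul, ← mul_sum]
  ring

theorem norm_sum_sq_le_card_mul_sum_norm_sq (s : Finset ι) (v : ι → E) :
    ‖∑ i ∈ s, v i‖ ^ 2 ≤ #s * ∑ i ∈ s, ‖v i‖ ^ 2 := by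
  have : 0 ≤ ∑ i ∈ s, ∑ j ∈ s, ‖v i - v j‖ ^ 2 := by positivity
  linarith [two_mul_card_mul_sum_norm_sq s v]

theorem eq_of_norm_sum_sq_eq_card_mul_sum_norm_sq {s : Finset ι} {v : ι → E}
    (h : ‖∑ i ∈ s, v i‖ ^ 2 = #s * ∑ i ∈ s, ‖v i‖ ^ 2) {i j : ι} (hi : i ∈ s) (hj : j ∈ s) :
    v i = v j := by
  have hzero : ∑ i ∈ s, ∑ j ∈ s, ‖v i - v j‖ ^ 2 = 0 := by
    linarith [two_mul_card_mul_sum_norm_sq s v]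
  have hij : ‖v i - v j‖ ^ 2 = 0 :=
    (sum_eq_zero_iff_of_nonneg fun _ _ ↦ by positivity).1
      ((sum_eq_zero_iff_of_nonneg fun _ _ ↦ by positivity).1 hzero i hi) j hj
  simpa [sub_eq_zero] using hij

theorem nnnorm_sum_sq_le_card_mul_sum_nnnorm_sq (s : Finset ι) (v : ι → E) :
    (‖∑ i ∈ s, v i‖₊ : ℝ≥0∞) ^ 2 ≤ #s * ∑ i ∈ s, (‖v i‖₊ : ℝ≥0∞) ^ 2 := by
  have h : ‖∑ i ∈ s, v i‖₊ ^ 2 ≤ #s * ∑ i ∈ s, ‖v i‖₊ ^ 2 := by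
    rw [← NNReal.coe_le_coe]; push_cast; exact norm_sum_sq_le_card_mul_sum_norm_sq s v
  exact_mod_cast h

theorem eq_of_nnnorm_sum_sq_eq_card_mul_sum_nnnorm_sq {s : Finset ι} {v : ι → E}
    (h : (‖∑ i ∈ s, v i‖₊ : ℝ≥0∞) ^ 2 = #s * ∑ i ∈ s, (‖v i‖₊ : ℝ≥0∞) ^ 2)
    {i j : ι} (hi : i ∈ s) (hj : j ∈ s) : v i = v j := by
  have h' : ‖∑ i ∈ s, v i‖₊ ^ 2 = #s * ∑ i ∈ s, ‖v i‖₊ ^ 2 := by exact_mod_cast h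
  rw [← NNReal.coe_inj] at h'
  push_cast at h'
  exact eq_of_norm_sum_sq_eq_card_mul_sum_norm_sq h' hi hj

end SumOfSquares

theorem measurable_trajComp {α : Type*} [MeasurableSpace α] {π : ℕ → α → α} {n : ℕ}
    (hπ : ∀ h < n, Measurable (π h)) : Measurable (trajComp π n) := by
  induction n with
  | zero => exact measurable_id
  | succ n ih => exact (hπ n n.lt_succ_self).comp (ih fun h hh ↦ hπ h (hh.trans n.lt_succ_self))

theorem trajComp_sub_eq_sum {α : Type*} [AddCommGroup α] (π : ℕ → α → α) (n : ℕ) (x : α) :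
    trajComp π n x - x = ∑ h ∈ range n, (trajComp π (h + 1) x - trajComp π h x) := by
  rw [sum_range_sub (fun h ↦ trajComp π h x)]
  rfl

section DynamicCost

variable {E : Type*} [NormedAddCommGroup E]

theorem nnnorm_trajComp_sub_sq_le [InnerProductSpace ℝ E] (π : ℕ → E → E) (n : ℕ) (x : E) :
    (‖trajComp π n x - x‖₊ : ℝ≥0∞) ^ 2 ≤
      n * ∑ h ∈ range n, (‖trajComp π (h + 1) x - trajComp π h x‖₊ : ℝ≥0∞) ^ 2 := by
  simpa [trajComp_sub_eq_sum] using nnnorm_sum_sq_le_card_mul_sum_nnnorm_sq (range n)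
    fun h ↦ trajComp π (h + 1) x - trajComp π h x

variable [MeasurableSpace E] [BorelSpace E] [SecondCountableTopology E] {μ : Measure E}
  {π : ℕ → E → E} {n : ℕ}

theorem measurable_nnnorm_trajComp_succ_sub_sq (hπ : ∀ h < n, Measurable (π h)) {h : ℕ}
    (hh : h < n) :
    Measurable fun x ↦ (‖trajComp π (h + 1) x - trajComp π h x‖₊ : ℝ≥0∞) ^ 2 :=
  ((measurable_trajComp fun i hi ↦ hπ i (by omega)).sub
    (measurable_trajComp fun i hi ↦ hπ i (by omega))).nnnorm.coe_nnreal_ennreal.pow_const 2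

theorem measurable_card_mul_sum_nnnorm_trajComp_succ_sub_sq (hπ : ∀ h < n, Measurable (π h)) :
    Measurable fun x ↦
      n * ∑ h ∈ range n, (‖trajComp π (h + 1) x - trajComp π h x‖₊ : ℝ≥0∞) ^ 2 :=
  measurable_const.mul <| Finset.measurable_sum _ fun _ hh ↦
    measurable_nnnorm_trajComp_succ_sub_sq hπ (mem_range.1 hh)

theorem lintegral_card_mul_sum_nnnorm_trajComp_succ_sub_sq (hπ : ∀ h < n, Measurable (π h)) :
    ∫⁻ x, n * ∑ h ∈ range n, (‖trajComp π (h + 1) x - trajComp π h x‖₊ : ℝ≥0∞) ^ 2 ∂μ =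
      n * ∑ h ∈ range n, ∫⁻ x, (‖trajComp π (h + 1) x - trajComp π h x‖₊ : ℝ≥0∞) ^ 2 ∂μ := by
  have hmeas := fun h (hh : h ∈ range n) ↦
    measurable_nnnorm_trajComp_succ_sub_sq hπ (mem_range.1 hh)
  rw [lintegral_const_mul _ (Finset.measurable_sum _ hmeas), lintegral_finsetSum _ hmeas]

variable [InnerProductSpace ℝ E]

theorem lintegral_nnnorm_trajComp_sub_sq_le (hπ : ∀ h < n, Measurable (π h)) :
    ∫⁻ x, (‖trajComp π n x - x‖₊ : ℝ≥0∞) ^ 2 ∂μ ≤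
      n * ∑ h ∈ range n, ∫⁻ x, (‖trajComp π (h + 1) x - trajComp π h x‖₊ : ℝ≥0∞) ^ 2 ∂μ := by
  rw [← lintegral_card_mul_sum_nnnorm_trajComp_succ_sub_sq hπ]
  exact lintegral_mono (nnnorm_trajComp_sub_sq_le π n)

theorem ae_trajComp_succ_sub_eq_of_lintegral_eq (hπ : ∀ h < n, Measurable (π h))
    (hfin : ∫⁻ x, (‖trajComp π n x - x‖₊ : ℝ≥0∞) ^ 2 ∂μ ≠ ⊤)
    (heq : ∫⁻ x, (‖trajComp π n x - x‖₊ : ℝ≥0∞) ^ 2 ∂μ =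
      n * ∑ h ∈ range n, ∫⁻ x, (‖trajComp π (h + 1) x - trajComp π h x‖₊ : ℝ≥0∞) ^ 2 ∂μ) :
    ∀ᵐ x ∂μ, ∀ i < n, ∀ j < n,
      trajComp π (i + 1) x - trajComp π i x = trajComp π (j + 1) x - trajComp π j x := by
  have hae := ae_eq_of_ae_le_of_lintegral_le (ae_of_all μ (nnnorm_trajComp_sub_sq_le π n)) hfin
    (measurable_card_mul_sum_nnnorm_trajComp_succ_sub_sq hπ).aemeasurable
    (by rw [lintegral_card_mul_sum_nnnorm_trajComp_succ_sub_sq hπ, heq])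
  filter_upwards [hae] with x hx i hi j hj
  have hx' : (‖∑ h ∈ range n, (trajComp π (h + 1) x - trajComp π h x)‖₊ : ℝ≥0∞) ^ 2 =
      #(range n) * ∑ h ∈ range n, (‖trajComp π (h + 1) x - trajComp π h x‖₊ : ℝ≥0∞) ^ 2 := by
    rw [card_range, ← trajComp_sub_eq_sum]
    exact hx
  exact eq_of_nnnorm_sum_sq_eq_card_mul_sum_nnnorm_sq hx' (mem_range.2 hi) (mem_range.2 hj)

end DynamicCost

section Wasserstein

variable {d : ℕ} {μ ν : Measure (EuclideanSpace ℝ (Fin d))}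

theorem W2sq_le_of_map_eq [IsProbabilityMeasure μ]
    {f : EuclideanSpace ℝ (Fin d) → EuclideanSpace ℝ (Fin d)} (hf : Measurable f)
    (hfν : μ.map f = ν) :
    W2sq μ ν ≤ 2⁻¹ * ∫⁻ x, (‖f x - x‖₊ : ℝ≥0∞) ^ 2 ∂μ := by
  have hg : Measurable fun x ↦ (x, f x) := measurable_id.prodMk hf
  have hcost : ∫⁻ p, (‖p.1 - p.2‖₊ : ℝ≥0∞) ^ 2 ∂(μ.map fun x ↦ (x, f x)) =
      ∫⁻ x, (‖f x - x‖₊ : ℝ≥0∞) ^ 2 ∂μ := by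
    rw [lintegral_map (by fun_prop) hg]
    simp_rw [← nnnorm_neg (_ - f _), neg_sub]
  refine hcost ▸ iInf₂_le _ ⟨Measure.isProbabilityMeasure_map hg.aemeasurable, ?_, ?_⟩
  · rw [Measure.map_map measurable_fst hg]
    exact Measure.map_id
  · rwa [Measure.map_map measurable_snd hg]

theorem nnnorm_sub_sq_le {E : Type*} [SeminormedAddCommGroup E] (a b : E) :
    (‖a - b‖₊ : ℝ≥0∞) ^ 2 ≤ 2 * ((‖a‖₊ : ℝ≥0∞) ^ 2 + (‖b‖₊ : ℝ≥0∞) ^ 2) := by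
  have h : ‖a - b‖₊ ^ 2 ≤ 2 * (‖a‖₊ ^ 2 + ‖b‖₊ ^ 2) :=
    (pow_le_pow_left₀ zero_le (nnnorm_sub_le a b) 2).trans add_sq_le
  exact_mod_cast h

theorem W2sq_ne_top [IsProbabilityMeasure μ] [IsProbabilityMeasure ν]
    (hμ : ∫⁻ x, (‖x‖₊ : ℝ≥0∞) ^ 2 ∂μ ≠ ⊤) (hν : ∫⁻ x, (‖x‖₊ : ℝ≥0∞) ^ 2 ∂ν ≠ ⊤) :
    W2sq μ ν ≠ ⊤ := by
  have hsq : Measurable fun x : EuclideanSpace ℝ (Fin d) ↦ (‖x‖₊ : ℝ≥0∞) ^ 2 := by fun_prop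
  have hcost : ∫⁻ p, (‖p.1 - p.2‖₊ : ℝ≥0∞) ^ 2 ∂(μ.prod ν) ≤
      2 * (∫⁻ x, (‖x‖₊ : ℝ≥0∞) ^ 2 ∂μ + ∫⁻ x, (‖x‖₊ : ℝ≥0∞) ^ 2 ∂ν) := calc
    _ ≤ ∫⁻ p, 2 * ((‖p.1‖₊ : ℝ≥0∞) ^ 2 + (‖p.2‖₊ : ℝ≥0∞) ^ 2) ∂(μ.prod ν) :=
      lintegral_mono fun p ↦ nnnorm_sub_sq_le p.1 p.2
    _ = _ := by
      rw [lintegral_const_mul _ (by fun_prop), lintegral_add_left (by fun_prop),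
        measurePreserving_fst.lintegral_comp hsq, measurePreserving_snd.lintegral_comp hsq]
  have hle : W2sq μ ν ≤ 2⁻¹ * ∫⁻ p, (‖p.1 - p.2‖₊ : ℝ≥0∞) ^ 2 ∂(μ.prod ν) :=
    iInf₂_le _ ⟨inferInstance, measurePreserving_fst.map_eq, measurePreserving_snd.map_eq⟩
  refine ne_top_of_le_ne_top ?_ (hle.trans (mul_le_mul_right hcost _))
  exact mul_ne_top (by simp) (mul_ne_top (by simp) (add_ne_top.2 ⟨hμ, hν⟩))

end Wasserstein

theorem stmt6_general {d : ℕ} (H : ℕ)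
    (μsrc μtgt : Measure (EuclideanSpace ℝ (Fin d)))
    [IsProbabilityMeasure μsrc] [IsProbabilityMeasure μtgt]
    (h2src : ∫⁻ x, (‖x‖₊ : ℝ≥0∞) ^ 2 ∂μsrc ≠ ⊤)
    (h2tgt : ∫⁻ x, (‖x‖₊ : ℝ≥0∞) ^ 2 ∂μtgt ≠ ⊤)
    (π : ℕ → EuclideanSpace ℝ (Fin d) → EuclideanSpace ℝ (Fin d))
    (hmeas : ∀ h ≤ H, Measurable (π h))
    (hfeas : μsrc.map (trajComp π (H + 1)) = μtgt)
    (hopt : ((H : ℝ≥0∞) + 1) / 2 *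
        ∑ h ∈ Finset.range (H + 1),
          ∫⁻ x, (‖trajComp π (h + 1) x - trajComp π h x‖₊ : ℝ≥0∞) ^ 2 ∂μsrc =
      W2sq μsrc μtgt) :
    (∀ᵐ x ∂μsrc, ∀ h ≤ H,
        trajComp π (h + 1) x - trajComp π h x = trajComp π 1 x - x) ∧
    2⁻¹ * ∫⁻ x, (‖trajComp π (H + 1) x - x‖₊ : ℝ≥0∞) ^ 2 ∂μsrc = W2sq μsrc μtgt := by
  have hπ : ∀ h < H + 1, Measurable (π h) := fun h hh ↦ hmeas h (Nat.lt_succ_iff.1 hh)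
  set static := ∫⁻ x, (‖trajComp π (H + 1) x - x‖₊ : ℝ≥0∞) ^ 2 ∂μsrc
  set dynamic := ((H + 1 : ℕ) : ℝ≥0∞) * ∑ h ∈ range (H + 1),
    ∫⁻ x, (‖trajComp π (h + 1) x - trajComp π h x‖₊ : ℝ≥0∞) ^ 2 ∂μsrc
  have hW : W2sq μsrc μtgt = 2⁻¹ * dynamic := by
    rw [← hopt, ENNReal.div_eq_inv_mul, mul_assoc, ← Nat.cast_succ]
  have hstatic : 2⁻¹ * static = W2sq μsrc μtgt :=
    le_antisymm (hW ▸ mul_le_mul_right (lintegral_nnnorm_trajComp_sub_sq_le hπ) _)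
      (W2sq_le_of_map_eq (measurable_trajComp hπ) hfeas)
  have hfin : static ≠ ⊤ := fun h ↦ W2sq_ne_top h2src h2tgt (by simp [← hstatic, h])
  have heq : static = dynamic :=
    (ENNReal.mul_right_inj (by simp) (by simp)).1 (hstatic.trans hW)
  refine ⟨?_, hstatic⟩
  filter_upwards [ae_trajComp_succ_sub_eq_of_lintegral_eq hπ hfin heq] with x hx h hh
  exact hx h (by omega) 0 (by omega)

/-- if a feasible policy has dynamic cost equal to `W₂²(μsrc, μtgt)`, then for
`μsrc`-a.e. `x` all increments of the induced trajectory coincide (`π̄_h(x) − π̄_{h−1}(x) =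
π̄_0(x) − x` for all `h ≤ H`), and the composite map `π̄_H` is an optimal Monge map. -/
theorem stmt6 {d : ℕ} (hd : 1 ≤ d) (H : ℕ)
    (μsrc μtgt : Measure (EuclideanSpace ℝ (Fin d)))
    [IsProbabilityMeasure μsrc] [IsProbabilityMeasure μtgt]
    (h2src : ∫⁻ x, (‖x‖₊ : ℝ≥0∞) ^ 2 ∂μsrc ≠ ⊤)
    (h2tgt : ∫⁻ x, (‖x‖₊ : ℝ≥0∞) ^ 2 ∂μtgt ≠ ⊤)
    (π : ℕ → EuclideanSpace ℝ (Fin d) → EuclideanSpace ℝ (Fin d))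
    (hmeas : ∀ h ≤ H, Measurable (π h))
    (hfeas : μsrc.map (trajComp π (H + 1)) = μtgt)
    (hopt : ((H : ℝ≥0∞) + 1) / 2 *
        ∑ h ∈ Finset.range (H + 1),
          ∫⁻ x, (‖trajComp π (h + 1) x - trajComp π h x‖₊ : ℝ≥0∞) ^ 2 ∂μsrc =
      W2sq μsrc μtgt) :
    (∀ᵐ x ∂μsrc, ∀ h ≤ H,
        trajComp π (h + 1) x - trajComp π h x = trajComp π 1 x - x) ∧
    2⁻¹ * ∫⁻ x, (‖trajComp π (H + 1) x - x‖₊ : ℝ≥0∞) ^ 2 ∂μsrc = W2sq μsrc μtgt :=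
  stmt6_general H μsrc μtgt h2src h2tgt π hmeas hfeas hopt
end
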